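/- arXiv:2512.08795 — 2 statements merged into one kernel-verified Lean document; each statement's English description precedes it below -/
import Mathlib

section
/- Let Ã = A ⊕ k·∂ be the rank-one extension with multiplication (X,a)·(Y,b) = (X·Y, (ℓ(X)ℓ(Y) − ℓ(X·Y))/c + a ℓ(Y) + b ℓ(X) + a b c), where ℓ(e) = 1 and c ≠ 0. Suppose E ∈ A is invertible with inverse E⁻¹, and let f := (λ − ℓ(E))/c and g := (λ⁻¹ − ℓ(E⁻¹))/c for some nonzero λ ∈ k. Set 𝓔 := (E, f) and 𝓔⁻¹ := (E⁻¹, g) in Ã. Then 𝓔 · 𝓔⁻¹ = (e, 0), i.e., 𝓔⁻¹ is the multiplicative inverse of 𝓔 in Ã. -/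
def extMul {k A : Type*} [Field k] [CommRing A] [Algebra k A]
    (ℓ : A →ₗ[k] k) (c : k) (p q : A × k) : A × k :=
  (p.1 * q.1,
    (ℓ p.1 * ℓ q.1 - ℓ (p.1 * q.1)) / c + p.2 * ℓ q.1 + q.2 * ℓ p.1 + p.2 * q.2 * c)

/-- with `f = (λ − ℓ(E))/c` and `g = (λ⁻¹ − ℓ(E⁻¹))/c`, the element
`𝓔 = (E, f)` has `𝓔⁻¹ = (E⁻¹, g)` as its multiplicative inverse in `Ã`. -/
theorem extMul_eventual_identity_inverse
    (k A : Type*) [Field k] [CommRing A] [Algebra k A]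
    (ℓ : A →ₗ[k] k) (c lam : k) (hc : c ≠ 0) (hlam : lam ≠ 0) (hℓe : ℓ 1 = 1)
    (E Einv : A) (hE : E * Einv = 1)
    (f g : k) (hf : f = (lam - ℓ E) / c) (hg : g = (lam⁻¹ - ℓ Einv) / c) :
    extMul ℓ c (E, f) (Einv, g) = ((1 : A), (0 : k)) := by
  simp only [extMul, hE, hℓe, hf, hg]
  refine Prod.ext rfl ?_
  field_simp
  ring
end

section
/- Let A be a commutative associative unital k-algebra, E ∈ A a unit, and define X ∗ Y := E⁻¹·X·Y. Let ℓ : A → k be linear, c ∈ k nonzero, λ ∈ k nonzero, and suppose ℓ(E) = λ − c·f for some f ∈ k. Define the extended product on A ⊕ k by (X,a) ⊛ (Y,b) := (X∗Y, Λ*(X,Y) + (a/λ)ℓ(Y) + (b/λ)ℓ(X) + a b c/λ) with Λ*(X,Y) := (ℓ(X)ℓ(Y)/λ − ℓ(X∗Y))/c. Then (E, f) ⊛ (X, 0) = (X, 0) for all X ∈ A, and (E, f) ⊛ (0, 1) = (0, 1); hence (E, f) is the identity for ⊛. -/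
/-- The dual extended product `⊛` on `A ⊕ k`:
`(X,a) ⊛ (Y,b) = (E⁻¹·X·Y, Λ*(X,Y) + (a/λ)ℓ(Y) + (b/λ)ℓ(X) + a b c/λ)` with
`Λ*(X,Y) = (ℓ(X)ℓ(Y)/λ − ℓ(E⁻¹·X·Y))/c`. -/
def extDualMul {k A : Type*} [Field k] [CommRing A] [Algebra k A]
    (ℓ : A →ₗ[k] k) (c lam : k) (Einv : A) (p q : A × k) : A × k :=
  (Einv * p.1 * q.1,
    (ℓ p.1 * ℓ q.1 / lam - ℓ (Einv * p.1 * q.1)) / c +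
      (p.2 / lam) * ℓ q.1 + (q.2 / lam) * ℓ p.1 + p.2 * q.2 * c / lam)

/-- with `f = (λ − ℓ(E))/c`, the element `(E, f)` is the identity for
the dual extended product `⊛`. -/
theorem extDualMul_identity
    (k A : Type*) [Field k] [CommRing A] [Algebra k A]
    (ℓ : A →ₗ[k] k) (c lam : k) (hc : c ≠ 0) (hlam : lam ≠ 0) (hℓe : ℓ 1 = 1)
    (E Einv : A) (hE : E * Einv = 1) (hE' : Einv * E = 1)
    (f : k) (hf : ℓ E = lam - c * f) :
    (∀ X : A, extDualMul ℓ c lam Einv (E, f) (X, (0 : k)) = (X, (0 : k))) ∧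
    extDualMul ℓ c lam Einv (E, f) ((0 : A), (1 : k)) = ((0 : A), (1 : k)) := by
  constructor
  · intro X
    simp only [extDualMul, hE', one_mul, hf, Prod.mk.injEq]
    constructor
    · trivial
    · field_simp
      ring
  · simp only [extDualMul, mul_zero, map_zero, Prod.mk.injEq, hf]
    constructor
    · trivial
    · field_simp
      ring
end
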